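/- Every eigenvalue of a matrix A ∈ ℝ_max^{n×n} is a root of its characteristic polynomial χ_A(t). -/

import Mathlib

open Filter

noncomputable section

/-- The max-plus semiring ℝ_max = ℝ ∪ {ε}, with ε = ⊥ = −∞,
`a ⊕ b = max a b` and `a ⊗ b = a + b` (the `Add` of `WithBot ℝ`). -/
abbrev RMax : Type := WithBot ℝ

/-- Max-plus vectors. -/
abbrev Vec (ι : Type) : Type := ι → RMax

/-- The max-plus zero vector ℰ. -/
def zeroV (ι : Type) : Vec ι := fun _ => (⊥ : RMax)

/-- Max-plus "negation" (inversion for ⊗), fixing ⊥. -/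
def mpNeg (a : RMax) : RMax := WithBot.map (fun r : ℝ => -r) a

section Defs

variable {ι κ₁ κ₂ κ₃ : Type}

/-- Matrix (or vector) sum `M ⊕ N`, entrywise max. -/
def mpAddM (M N : Matrix κ₁ κ₂ RMax) : Matrix κ₁ κ₂ RMax := fun i j => max (M i j) (N i j)

/-- Scalar multiplication `l ⊗ M` of a matrix. -/
def smulM (l : RMax) (M : Matrix κ₁ κ₂ RMax) : Matrix κ₁ κ₂ RMax := fun i j => l + M i j

/-- Scalar multiplication `l ⊗ x` of a vector. -/
def smulV (l : RMax) (x : Vec ι) : Vec ι := fun i => l + x i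

/-- Max-plus matrix product `M ⊗ N`. -/
def mpMul [Fintype κ₂] (M : Matrix κ₁ κ₂ RMax) (N : Matrix κ₂ κ₃ RMax) : Matrix κ₁ κ₃ RMax :=
  fun i j => Finset.univ.sup fun k => M i k + N k j

/-- Max-plus matrix-vector product `M ⊗ x`. -/
def mpMulVec [Fintype κ₂] (M : Matrix κ₁ κ₂ RMax) (x : Vec κ₂) : Vec κ₁ :=
  fun i => Finset.univ.sup fun j => M i j + x j

/-- The max-plus identity matrix `E_n` (0 on the diagonal, ε elsewhere). -/
def mpId [DecidableEq ι] : Matrix ι ι RMax := fun i j => if i = j then (0 : RMax) else ⊥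

/-- Max-plus inverse of a generalized permutation matrix:
the transpose with the finite entries negated. -/
def genInv (P : Matrix ι ι RMax) : Matrix ι ι RMax := fun i j => mpNeg (P j i)

/-- The max-plus determinant `det A = ⊕_π ⊗_i a_{i π(i)}`. -/
def mpDet [Fintype ι] [DecidableEq ι] (A : Matrix ι ι RMax) : RMax :=
  Finset.univ.sup fun π : Equiv.Perm ι => ∑ i, A i (π i)

/-- Max-plus matrix powers. -/
def mpPow [Fintype ι] [DecidableEq ι] (P : Matrix ι ι RMax) : ℕ → Matrix ι ι RMax
  | 0 => mpId
  | k + 1 => mpMul P (mpPow P k)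

/-- The Kleene star `P* = E ⊕ P ⊕ P^{⊗2} ⊕ ⋯ ⊕ P^{⊗(n−1)}`. -/
def mpStar [Fintype ι] [DecidableEq ι] (P : Matrix ι ι RMax) : Matrix ι ι RMax :=
  fun i j => (Finset.range (Fintype.card ι)).sup fun k => mpPow P k i j

/-- A multi-circuit on the vertex set `ι`: a union of vertex-disjoint elementary circuits,
encoded by its vertex set `verts` together with the successor permutation `perm`,
which is the identity outside `verts`.  Its edge set is `{(i, perm i) | i ∈ verts}`
and its length is `verts.card`. -/
structure MultiCircuit (ι : Type) where
  verts : Finset ι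
  perm : Equiv.Perm ι
  fixes : ∀ i, i ∉ verts → perm i = i

/-- The weight `w(C)` of a multi-circuit with respect to the matrix `A`. -/
def mcWeight (A : Matrix ι ι RMax) (C : MultiCircuit ι) : RMax :=
  ∑ i ∈ C.verts, A i (C.perm i)

/-- The multi-circuit `C` lies in the graph `G(A)` (all its edges have weight ≠ ε). -/
def InGraph (A : Matrix ι ι RMax) (C : MultiCircuit ι) : Prop :=
  ∀ i ∈ C.verts, A i (C.perm i) ≠ ⊥

/-- A multi-circuit consisting of a single (elementary) circuit. -/
def IsCircuit (C : MultiCircuit ι) : Prop :=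
  C.verts.Nonempty ∧ ∀ i ∈ C.verts, ∀ j ∈ C.verts, C.perm.SameCycle i j

/-- `D` is a critical circuit of `G(A)`: an elementary circuit of `G(A)` whose average
weight is maximal among all elementary circuits of `G(A)`
(averages `w/ℓ` are compared without division via `ℓ' • w ≥ ℓ • w'`). -/
def IsCritical (A : Matrix ι ι RMax) (D : MultiCircuit ι) : Prop :=
  IsCircuit D ∧ InGraph A D ∧
    ∀ D' : MultiCircuit ι, IsCircuit D' → InGraph A D' →
      D.verts.card • mcWeight A D' ≤ D'.verts.card • mcWeight A D

/-- `ρ` is the maximum average weight of the (elementary) circuits of `G(A)`,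
taken to be ε if `G(A)` has no circuit. -/
def IsMaxCycleMean (A : Matrix ι ι RMax) (ρ : RMax) : Prop :=
  (∀ D : MultiCircuit ι, IsCircuit D → InGraph A D → mcWeight A D ≤ D.verts.card • ρ) ∧
    ((∃ D : MultiCircuit ι, IsCircuit D ∧ InGraph A D ∧ mcWeight A D = D.verts.card • ρ) ∨
      (ρ = ⊥ ∧ ∀ D : MultiCircuit ι, IsCircuit D → ¬InGraph A D))

/-- `l` is a (geometric) eigenvalue of `A`: `A ⊗ x = l ⊗ x` for some `x ≠ ℰ`. -/
def IsEigen [Fintype ι] (A : Matrix ι ι RMax) (l : RMax) : Prop :=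
  ∃ x : Vec ι, x ≠ zeroV ι ∧ mpMulVec A x = smulV l x

variable [Fintype ι] [DecidableEq ι]

/-- The value `w(C) ⊗ l^{⊗(n − ℓ(C))}` of the term of `χ_A(l)` corresponding to the
multi-circuit `C`. -/
def ValAt (A : Matrix ι ι RMax) (C : MultiCircuit ι) (l : RMax) : RMax :=
  mcWeight A C + (Fintype.card ι - C.verts.card) • l

/-- `C` is `μ`-maximal (for a real `μ`): it attains
`χ_A(μ) = max_C (w(C) + (n − ℓ(C))·μ)`. -/
def MaximalAt (A : Matrix ι ι RMax) (C : MultiCircuit ι) (μ : ℝ) : Prop :=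
  ∀ C' : MultiCircuit ι, ValAt A C' (μ : RMax) ≤ ValAt A C (μ : RMax)

/-- `C` is `l`-maximal, for `l ∈ ℝ_max`; for `l = ε` this means `μ`-maximal for all
sufficiently small real `μ`. -/
def IsLamMax (A : Matrix ι ι RMax) (C : MultiCircuit ι) (l : RMax) : Prop :=
  (∀ μ : ℝ, l = (μ : RMax) → MaximalAt A C μ) ∧
    (l = ⊥ → ∃ μ₀ : ℝ, ∀ μ : ℝ, μ ≤ μ₀ → MaximalAt A C μ)

/-- `l` is an algebraic eigenvalue of `A`, i.e. a root of the characteristic polynomial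
`χ_A(t)`: a real `l` is a root iff there are two `l`-maximal multi-circuits of different
lengths, and `ε` is a root iff `G(A)` contains no multi-circuit of length `n`. -/
def IsAlgEigen (A : Matrix ι ι RMax) (l : RMax) : Prop :=
  (l ≠ ⊥ ∧ ∃ C C' : MultiCircuit ι, IsLamMax A C l ∧ IsLamMax A C' l ∧
      C.verts.card ≠ C'.verts.card) ∨
    (l = ⊥ ∧ ∀ C : MultiCircuit ι, C.verts.card = Fintype.card ι → ¬InGraph A C)

open Classical in
/-- The multiplicity of `l` as a root of the characteristic polynomial `χ_A(t)`:
for a real `l` it is the difference between the maximal and the minimal length of an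
`l`-maximal multi-circuit; for `l = ε` it is `n` minus the maximal length of a
multi-circuit of `G(A)`.  It is `0` when `l` is not a root. -/
noncomputable def rootMult (A : Matrix ι ι RMax) (l : RMax) : ℕ :=
  if l = ⊥ then
    Fintype.card ι - sSup {m : ℕ | ∃ C : MultiCircuit ι, InGraph A C ∧ C.verts.card = m}
  else
    sSup {m : ℕ | ∃ C : MultiCircuit ι, IsLamMax A C l ∧ C.verts.card = m} -
      sInf {m : ℕ | ∃ C : MultiCircuit ι, IsLamMax A C l ∧ C.verts.card = m}

/-- The matrix `A_C`. -/
def matC (A : Matrix ι ι RMax) (C : MultiCircuit ι) : Matrix ι ι RMax :=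
  fun i j => if i ∈ C.verts ∧ j = C.perm i then A i j else ⊥

/-- The matrix `A_{∖C}`. -/
def matNotC (A : Matrix ι ι RMax) (C : MultiCircuit ι) : Matrix ι ι RMax :=
  fun i j => if i ∈ C.verts ∧ j = C.perm i then ⊥ else A i j

/-- The diagonal matrix `E_C`. -/
def eC (C : MultiCircuit ι) : Matrix ι ι RMax :=
  fun i j => if i = j ∧ i ∈ C.verts then (0 : RMax) else ⊥

/-- The diagonal matrix `E_{∖C}`. -/
def eNotC (C : MultiCircuit ι) : Matrix ι ι RMax :=
  fun i j => if i = j ∧ i ∉ C.verts then (0 : RMax) else ⊥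

/-- `W(A,l,C) = {x : (A_{∖C} ⊕ l ⊗ E_C) ⊗ x = (A_C ⊕ l ⊗ E_{∖C}) ⊗ x}`. -/
def WAC (A : Matrix ι ι RMax) (l : RMax) (C : MultiCircuit ι) : Set (Vec ι) :=
  {x | mpMulVec (mpAddM (matNotC A C) (smulM l (eC C))) x =
       mpMulVec (mpAddM (matC A C) (smulM l (eNotC C))) x}

/-- `B_{A,l,C} = (A_C ⊕ l ⊗ E_{∖C})^{−1} ⊗ (A_{∖C} ⊕ l ⊗ E_C)`. -/
def Bmat (A : Matrix ι ι RMax) (l : RMax) (C : MultiCircuit ι) : Matrix ι ι RMax :=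
  mpMul (genInv (mpAddM (matC A C) (smulM l (eNotC C)))) (mpAddM (matNotC A C) (smulM l (eC C)))

/-- Assumption (★): for each `l ∈ ℝ_max`, any two distinct `l`-maximal multi-circuits
of `G(A)` have different lengths. -/
def StarAssumption (A : Matrix ι ι RMax) : Prop :=
  ∀ l : RMax, ∀ C C' : MultiCircuit ι, IsLamMax A C l → IsLamMax A C' l →
    C.verts.card = C'.verts.card → C = C'

/-- The perturbed matrix `A(ζ;δ)` with entries `a_{ij} − ζ_{ij}·δ` (ε stays ε). -/
def perturb (A : Matrix ι ι RMax) (ζ : Matrix ι ι ℝ) (δ : ℝ) : Matrix ι ι RMax :=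
  fun i j => A i j + ((-(ζ i j * δ) : ℝ) : RMax)

/-- The set `Z` of perturbation directions `ζ ∈ [0,1]^{n×n}` for which `A(ζ;δ)`
satisfies (★) for all sufficiently small `δ > 0`. -/
def Zset (A : Matrix ι ι RMax) : Set (Matrix ι ι ℝ) :=
  {ζ | (∀ i j, ζ i j ∈ Set.Icc (0 : ℝ) 1) ∧
    ∃ δ' : ℝ, 0 < δ' ∧ ∀ δ : ℝ, 0 < δ → δ < δ' → StarAssumption (perturb A ζ δ)}

/-- The interval `B(l, r) = [l − r, l + r] ⊆ ℝ_max` (and `B(ε, r) = {ε}`). -/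
def mpBall (l : RMax) (r : ℝ) : Set RMax :=
  {l' | (l = ⊥ ∧ l' = ⊥) ∨ ∃ x y : ℝ, l = (x : RMax) ∧ l' = (y : RMax) ∧ |y - x| ≤ r}

/-- Convergence in `ℝ_max` as `δ → +0`. -/
def RMaxTendsto (f : ℝ → RMax) (a : RMax) : Prop :=
  (a = ⊥ → ∀ M : ℝ, ∀ᶠ δ in nhdsWithin 0 (Set.Ioi (0 : ℝ)), f δ < (M : RMax)) ∧
    (∀ x : ℝ, a = (x : RMax) → ∀ ε : ℝ, 0 < ε →
      ∀ᶠ δ in nhdsWithin 0 (Set.Ioi (0 : ℝ)), ∃ y : ℝ, f δ = (y : RMax) ∧ |y - x| < ε)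

/-- The (max-plus) sum `⊕_k U_k` of a family of subsets of `ℝ_max^n`. -/
def setSum {κ : Type} (U : κ → Set (Vec ι)) : Set (Vec ι) :=
  {x | ∃ s : Finset κ, ∃ f : κ → Vec ι, (∀ k ∈ s, f k ∈ U k) ∧
    x = fun i => s.sup fun k => f k i}

/-- The limit `lim_{δ→+0} S(δ)` of a parametrized family of subsets of `ℝ_max^n`. -/
def setLim (S : ℝ → Set (Vec ι)) : Set (Vec ι) :=
  {x | ∃ g : ℝ → Vec ι, (∀ δ : ℝ, 0 < δ → g δ ∈ S δ) ∧
    ∀ i : ι, RMaxTendsto (fun δ => g δ i) (x i)}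

/-- The sum `⊕_{l' ∈ S} W(A', l', C_{l'})`, where `C_{l'}` is an `l'`-maximal
multi-circuit of `G(A')`. -/
def perturbSum (A' : Matrix ι ι RMax) (S : Set RMax) : Set (Vec ι) :=
  setSum fun l : S =>
    {x | ∃ C : MultiCircuit ι, IsLamMax A' C (l : RMax) ∧ x ∈ WAC A' (l : RMax) C}

/-- The algebraic eigenspace
`W(A,l) = ⋂_{ζ∈Z} lim_{δ→+0} ⊕_{l' ∈ B(l,nδ)} W(A(ζ;δ), l', C_{l'}(ζ;δ))`. -/
def algEigenspace (A : Matrix ι ι RMax) (l : RMax) : Set (Vec ι) :=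
  ⋂ ζ ∈ Zset A, setLim fun δ => perturbSum (perturb A ζ δ) (mpBall l (Fintype.card ι * δ))

/-- The max-plus span of a set of vectors: all finite max-plus linear combinations. -/
def mpSpan (S : Set (Vec ι)) : Set (Vec ι) :=
  {x | ∃ s : Finset (Vec ι), ↑s ⊆ S ∧ ∃ c : Vec ι → RMax,
    x = fun i => s.sup fun v => c v + v i}

/-- `B` is a basis of `U`: a minimal spanning set. -/
def IsBasis (B U : Set (Vec ι)) : Prop :=
  mpSpan B = U ∧ ∀ B' : Set (Vec ι), B' ⊆ B → mpSpan B' = U → B' = B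

/-- Tropical orthogonality: the maximum in `ᵗx ⊗ y = ⊕_i x_i ⊗ y_i` is attained
at least twice (a maximum equal to ε counting as attained by all indices). -/
def Orthogonal (x y : Vec ι) : Prop :=
  (Finset.univ.sup fun i => x i + y i) = ⊥ ∨
    ∃ i j : ι, i ≠ j ∧ x i + y i = (Finset.univ.sup fun k => x k + y k) ∧
      x j + y j = (Finset.univ.sup fun k => x k + y k)

/-- The tropical kernel of a matrix: vectors for which, in every row, the maximum is
attained at least twice (a maximum equal to ε counting as attained by all indices). -/
def tropKernel {κ : Type} (A : Matrix κ ι RMax) : Set (Vec ι) :=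
  {x | ∀ i : κ, (Finset.univ.sup fun j => A i j + x j) = ⊥ ∨
    ∃ j k : ι, j ≠ k ∧ A i j + x j = (Finset.univ.sup fun j' => A i j' + x j') ∧
      A i k + x k = (Finset.univ.sup fun j' => A i j' + x j')}

/-- `A` is (tropically) nonsingular: the maximum in `det A` is attained by exactly
one permutation. -/
def Nonsingular (A : Matrix ι ι RMax) : Prop :=
  ∃! π : Equiv.Perm ι, (∑ i, A i (π i)) = mpDet A

/-- The minor `A^{(r,c)}`, deleting row `r` and column `c`. -/
def mpMinor {n : ℕ} (A : Matrix (Fin (n + 1)) (Fin (n + 1)) RMax) (r c : Fin (n + 1)) :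
    Matrix (Fin n) (Fin n) RMax :=
  fun i j => A (r.succAbove i) (c.succAbove j)

/-- The max-plus adjugate, `adj(A)_{ij} = det A^{(j,i)}`. -/
def mpAdj {n : ℕ} (A : Matrix (Fin (n + 1)) (Fin (n + 1)) RMax) :
    Matrix (Fin (n + 1)) (Fin (n + 1)) RMax :=
  fun i j => mpDet (mpMinor A j i)

/-- The submatrix `[A_C]_{KK}` with `K = V(C)`. -/
def subPC (A : Matrix ι ι RMax) (C : MultiCircuit ι) :
    Matrix {k // k ∈ C.verts} {k // k ∈ C.verts} RMax :=
  fun i j => matC A C i.1 j.1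

/-- The submatrix `[A_{∖C}]_{KK}` with `K = V(C)`. -/
def subPNC (A : Matrix ι ι RMax) (C : MultiCircuit ι) :
    Matrix {k // k ∈ C.verts} {k // k ∈ C.verts} RMax :=
  fun i j => matNotC A C i.1 j.1

/-- The matrix `M = [A_C]_{KK}^{−1} ⊗ [A_{∖C}]_{KK}`. -/
def xiM (A : Matrix ι ι RMax) (C : MultiCircuit ι) :
    Matrix {k // k ∈ C.verts} {k // k ∈ C.verts} RMax :=
  mpMul (genInv (subPC A C)) (subPNC A C)

/-- `M* ⊗ ([A_C]_{KK}^{−1} ⊗ [A]_{KL}) ⊗ [x]_L`, the `K`-part of `ξ_{A,C}(x)`. -/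
def xiVec (A : Matrix ι ι RMax) (C : MultiCircuit ι) (x : Vec ι) : Vec {k // k ∈ C.verts} :=
  mpMulVec (mpStar (xiM A C)) (mpMulVec (genInv (subPC A C))
    (fun k : {k // k ∈ C.verts} =>
      (Finset.univ.filter fun j : ι => j ∉ C.verts).sup fun j => A k.1 j + x j))

/-- The linear map `ξ_{A,C} : ℝ_max^n → ℝ_max^n`. -/
def xi (A : Matrix ι ι RMax) (C : MultiCircuit ι) (x : Vec ι) : Vec ι :=
  fun i => if h : i ∈ C.verts then xiVec A C x ⟨i, h⟩ else x i

end Defs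

end

/-!
An eigenvector `x` for `μ` satisfies `a_ij + x_j ≤ μ + x_i`, and for `i` in the support of `x`
equality holds along some edge that stays in the support. If `μ = ε`, this forces a column of `A`
to be `ε`. For real `μ`, telescoping `x` along circuits shows that some `μ`-maximal multi-circuit
avoids the support of `x`, while tight edges inside the support close up into circuits of weight
`μ` per vertex; adjoining them gives a second `μ`-maximal multi-circuit of a different length.
-/

theorem Function.nonempty_periodicPts {α : Type*} [Finite α] [Nonempty α] (f : α → α) :
    (Function.periodicPts f).Nonempty := by
  obtain ⟨m, n, hmn, heq⟩ :=
    Finite.exists_ne_map_eq_of_infinite fun k => f^[k] (Classical.arbitrary α)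
  wlog hlt : m < n generalizing m n
  · exact this n m hmn.symm heq.symm (by omega)
  refine ⟨f^[m] (Classical.arbitrary α), Function.mk_mem_periodicPts (Nat.sub_pos_of_lt hlt) ?_⟩
  rw [Function.IsPeriodicPt, Function.IsFixedPt, ← Function.iterate_add_apply,
    Nat.sub_add_cancel hlt.le, heq]

theorem Finset.sum_comp_of_mapsTo_of_injOn {ι M : Type*} [AddCommMonoid M] {V : Finset ι}
    {f : ι → ι} (hf : Set.MapsTo f V V) (hinj : Set.InjOn f V) (g : ι → M) :
    ∑ i ∈ V, g (f i) = ∑ i ∈ V, g i :=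
  Finset.sum_nbij f hf hinj (Finset.surjOn_of_injOn_of_card_le f hf hinj le_rfl) fun _ _ => rfl

section Subeigenvector

variable {ι : Type} {A : Matrix ι ι RMax} {x : Vec ι} {μ : RMax} {V : Finset ι} {f : ι → ι}

/-- `A ⊗ x ≤ μ ⊗ x`. -/
def IsSubeigenvector (A : Matrix ι ι RMax) (μ : RMax) (x : Vec ι) : Prop :=
  ∀ i j, A i j + x j ≤ μ + x i

theorem exists_ne_bot_of_ne_zeroV (h : x ≠ zeroV ι) : ∃ i, x i ≠ ⊥ := by
  by_contra! hbot
  exact h (funext hbot)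

theorem isSubeigenvector_of_mpMulVec_eq [Fintype ι] (h : mpMulVec A x = smulV μ x) :
    IsSubeigenvector A μ x := fun i j =>
  (Finset.le_sup (f := fun j => A i j + x j) (Finset.mem_univ j)).trans_eq (congrFun h i)

theorem sum_le_card_nsmul_of_forall_le (hf : Set.MapsTo f V V) (hinj : Set.InjOn f V)
    (hx : ∀ i ∈ V, x i ≠ ⊥) (h : ∀ i ∈ V, A i (f i) + x (f i) ≤ μ + x i) :
    ∑ i ∈ V, A i (f i) ≤ V.card • μ := by
  have hsum := Finset.sum_le_sum h
  rw [Finset.sum_add_distrib, Finset.sum_comp_of_mapsTo_of_injOn hf hinj, Finset.sum_add_distrib,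
    Finset.sum_const] at hsum
  exact WithBot.le_of_add_le_add_right (WithBot.sum_eq_bot_iff.not.mpr (by simpa using hx)) hsum

theorem sum_eq_card_nsmul_of_forall_eq (hf : Set.MapsTo f V V) (hinj : Set.InjOn f V)
    (hx : ∀ i ∈ V, x i ≠ ⊥) (h : ∀ i ∈ V, A i (f i) + x (f i) = μ + x i) :
    ∑ i ∈ V, A i (f i) = V.card • μ := by
  have hsum := Finset.sum_congr rfl h
  rw [Finset.sum_add_distrib, Finset.sum_comp_of_mapsTo_of_injOn hf hinj, Finset.sum_add_distrib,
    Finset.sum_const] at hsum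
  exact WithBot.add_right_cancel (WithBot.sum_eq_bot_iff.not.mpr (by simpa using hx)) hsum

end Subeigenvector

namespace MultiCircuit

variable {ι : Type}

theorem perm_mem_verts (C : MultiCircuit ι) {i : ι} (hi : i ∈ C.verts) : C.perm i ∈ C.verts := by
  by_contra h
  rw [C.perm.injective (C.fixes _ h)] at h
  exact h hi

instance : Inhabited (MultiCircuit ι) := ⟨⟨∅, 1, fun _ _ => rfl⟩⟩

instance [Finite ι] : Finite (MultiCircuit ι) :=
  Finite.of_injective (fun C : MultiCircuit ι => (C.verts, C.perm))
    fun ⟨_, _, _⟩ ⟨_, _, _⟩ h => by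
      obtain ⟨rfl, rfl⟩ := Prod.ext_iff.mp h
      rfl

variable [DecidableEq ι]

noncomputable def ofMapsTo (V : Finset ι) (f : ι → ι) (hf : Set.MapsTo f V V)
    (hinj : Set.InjOn f V) : MultiCircuit ι where
  verts := V
  perm := Equiv.Perm.ofSubtype <| Equiv.ofBijective (hf.restrict f V V)
    (Finite.injective_iff_bijective.mp (hf.restrict_inj.mpr hinj))
  fixes _ hi := Equiv.Perm.ofSubtype_apply_of_not_mem _ hi

theorem mcWeight_ofMapsTo (A : Matrix ι ι RMax) {V : Finset ι} {f : ι → ι}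
    (hf : Set.MapsTo f V V) (hinj : Set.InjOn f V) :
    mcWeight A (ofMapsTo V f hf hinj) = ∑ i ∈ V, A i (f i) :=
  Finset.sum_congr rfl fun i hi => by
    rw [ofMapsTo, Equiv.Perm.ofSubtype_apply_of_mem _ (Finset.mem_coe.mpr hi)]
    rfl

def union (C D : MultiCircuit ι) : MultiCircuit ι where
  verts := C.verts ∪ D.verts
  perm := C.perm * D.perm
  fixes i hi := by
    rw [Finset.mem_union, not_or] at hi
    rw [Equiv.Perm.mul_apply, D.fixes i hi.2, C.fixes i hi.1]

theorem mcWeight_union (A : Matrix ι ι RMax) {C D : MultiCircuit ι}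
    (h : Disjoint C.verts D.verts) : mcWeight A (C.union D) = mcWeight A C + mcWeight A D := by
  rw [mcWeight, union, Finset.sum_union h]
  congr 1 <;> refine Finset.sum_congr rfl fun i hi => ?_
  · rw [Equiv.Perm.mul_apply, D.fixes i (Finset.disjoint_left.mp h hi)]
  · rw [Equiv.Perm.mul_apply, C.fixes _ (Finset.disjoint_right.mp h (D.perm_mem_verts hi))]

end MultiCircuit

open MultiCircuit

section Maximal

variable {ι : Type} [Fintype ι] {A : Matrix ι ι RMax}

theorem exists_maximalAt (A : Matrix ι ι RMax) (μ : ℝ) : ∃ C, MaximalAt A C μ :=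
  Finite.exists_max fun C => ValAt A C μ

theorem isLamMax_coe_iff {C : MultiCircuit ι} {μ : ℝ} : IsLamMax A C μ ↔ MaximalAt A C μ :=
  ⟨fun h => h.1 μ rfl, fun h =>
    ⟨fun _ hν => WithBot.coe_injective hν ▸ h, fun hbot => absurd hbot WithBot.coe_ne_bot⟩⟩

theorem isAlgEigen_bot_of_isEigen (h : IsEigen A ⊥) : IsAlgEigen A ⊥ := by
  obtain ⟨x, hne, hx⟩ := h
  obtain ⟨j, hj⟩ := exists_ne_bot_of_ne_zeroV hne
  refine Or.inr ⟨rfl, fun C hcard hG => ?_⟩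
  have hmem : C.perm.symm j ∈ C.verts := Finset.eq_univ_of_card _ hcard ▸ Finset.mem_univ _
  have hcol := isSubeigenvector_of_mpMulVec_eq hx (C.perm.symm j) j
  rw [WithBot.bot_add, le_bot_iff, WithBot.add_eq_bot] at hcol
  exact hG _ hmem (by rw [Equiv.apply_symm_apply]; exact hcol.resolve_right hj)

variable [DecidableEq ι]

theorem valAt_union_of_mcWeight_eq {C D : MultiCircuit ι} {l : RMax}
    (h : Disjoint C.verts D.verts) (hD : mcWeight A D = D.verts.card • l) :
    ValAt A (C.union D) l = ValAt A C l := by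
  have hcard := Finset.card_union_of_disjoint h
  have hle := Finset.card_le_univ (C.verts ∪ D.verts)
  rw [ValAt, mcWeight_union A h, hD, add_assoc, ← add_nsmul, ValAt]
  congr 2
  change D.verts.card + (Fintype.card ι - (C.verts ∪ D.verts).card) = _
  omega

/- No edge of `G(A)` enters the support of `x` from outside, so a multi-circuit of `G(A)` splits
into a part inside the support, of weight at most `μ` per vertex, and a part outside it. -/
theorem exists_valAt_le_of_isSubeigenvector {x : Vec ι} {μ : RMax}
    (hx : IsSubeigenvector A μ x) (C : MultiCircuit ι) :
    ∃ D : MultiCircuit ι, (∀ i ∈ D.verts, x i = ⊥) ∧ ValAt A C μ ≤ ValAt A D μ := by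
  by_cases hG : InGraph A C
  swap
  · obtain ⟨i, hi, hbot⟩ : ∃ i ∈ C.verts, A i (C.perm i) = ⊥ := by simpa [InGraph] using hG
    refine ⟨default, fun i hi => absurd hi (Finset.notMem_empty i), ?_⟩
    rw [ValAt, mcWeight, WithBot.sum_eq_bot_iff.mpr ⟨i, hi, hbot⟩, WithBot.bot_add]
    exact bot_le
  set T := C.verts.filter (x · = ⊥)
  set K := C.verts.filter (x · ≠ ⊥)
  have hT : Set.MapsTo C.perm T T := fun i hi => by
    obtain ⟨hiC, hxi⟩ := Finset.mem_filter.mp hi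
    have := hx i (C.perm i)
    rw [hxi, WithBot.add_bot, le_bot_iff, WithBot.add_eq_bot] at this
    exact Finset.mem_filter.mpr ⟨C.perm_mem_verts hiC, this.resolve_left (hG i hiC)⟩
  have hK : Set.MapsTo C.perm K K := fun i hi => by
    obtain ⟨hiC, hxi⟩ := Finset.mem_filter.mp hi
    refine Finset.mem_filter.mpr ⟨C.perm_mem_verts hiC, fun hσi => hxi ?_⟩
    have := Equiv.Perm.perm_symm_on_of_perm_on_finset (fun _ hj => hT hj)
      (Finset.mem_filter.mpr ⟨C.perm_mem_verts hiC, hσi⟩)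
    rw [Equiv.symm_apply_apply] at this
    exact (Finset.mem_filter.mp this).2
  refine ⟨ofMapsTo T C.perm hT C.perm.injective.injOn, fun i hi => (Finset.mem_filter.mp hi).2, ?_⟩
  have hsplit : mcWeight A C = ∑ i ∈ K, A i (C.perm i) + ∑ i ∈ T, A i (C.perm i) := by
    rw [add_comm]
    exact (Finset.sum_filter_add_sum_filter_not _ _ _).symm
  have hKw : ∑ i ∈ K, A i (C.perm i) ≤ K.card • μ :=
    sum_le_card_nsmul_of_forall_le hK C.perm.injective.injOn
      (fun i hi => (Finset.mem_filter.mp hi).2) fun i _ => hx i (C.perm i)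
  have hcard : T.card + K.card = C.verts.card := Finset.card_filter_add_card_filter_not _
  have hle := Finset.card_le_univ C.verts
  calc ValAt A C μ
      = ∑ i ∈ K, A i (C.perm i) + ∑ i ∈ T, A i (C.perm i) +
          (Fintype.card ι - C.verts.card) • μ := by rw [ValAt, hsplit]
    _ ≤ K.card • μ + ∑ i ∈ T, A i (C.perm i) + (Fintype.card ι - C.verts.card) • μ := by
          gcongr
    _ = ValAt A (ofMapsTo T C.perm hT C.perm.injective.injOn) μ := by
          rw [ValAt, mcWeight_ofMapsTo, add_comm (K.card • μ), add_assoc, ← add_nsmul]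
          congr 2
          change _ = Fintype.card ι - T.card
          omega

/- The multi-circuit is formed by the periodic points of a successor map choosing, at each `i`
in the support, an edge attaining the maximum in `(A ⊗ x)_i`. -/
theorem exists_multiCircuit_mcWeight_eq_of_mpMulVec_eq {x : Vec ι} {μ : ℝ} (hne : x ≠ zeroV ι)
    (h : mpMulVec A x = smulV μ x) :
    ∃ Z : MultiCircuit ι, Z.verts.Nonempty ∧ (∀ i ∈ Z.verts, x i ≠ ⊥) ∧
      mcWeight A Z = Z.verts.card • (μ : RMax) := by
  obtain ⟨i₀, hi₀⟩ := exists_ne_bot_of_ne_zeroV hne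
  have hsucc : ∀ i, ∃ j, x j ≠ ⊥ ∧ (x i ≠ ⊥ → A i j + x j = μ + x i) := by
    intro i
    by_cases hi : x i = ⊥
    · exact ⟨i₀, hi₀, fun h => absurd hi h⟩
    obtain ⟨j, -, hj⟩ :=
      Finset.exists_mem_eq_sup Finset.univ ⟨i, Finset.mem_univ i⟩ fun j => A i j + x j
    have htight : A i j + x j = μ + x i := hj ▸ congrFun h i
    have hfin : A i j + x j ≠ ⊥ := htight ▸ WithBot.add_ne_bot.mpr ⟨WithBot.coe_ne_bot, hi⟩
    exact ⟨j, (WithBot.add_ne_bot.mp hfin).2, fun _ => htight⟩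
  choose f hfx hf using hsucc
  classical
  set O := Finset.univ.filter (· ∈ Function.periodicPts f)
  have hO : Set.BijOn f O O := by simpa [O] using Function.bijOn_periodicPts f
  have hOx : ∀ i ∈ O, x i ≠ ⊥ := fun i hi => by
    obtain ⟨j, rfl⟩ := Function.periodicPts_subset_range (Finset.mem_filter.mp hi).2
    exact hfx j
  refine ⟨ofMapsTo O f hO.mapsTo hO.injOn, ?_, hOx, ?_⟩
  · obtain ⟨i, hi⟩ := (haveI : Nonempty ι := ⟨i₀⟩; Function.nonempty_periodicPts f)
    exact ⟨i, Finset.mem_filter.mpr ⟨Finset.mem_univ i, hi⟩⟩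
  · rw [mcWeight_ofMapsTo]
    exact sum_eq_card_nsmul_of_forall_eq hO.mapsTo hO.injOn hOx fun i hi => hf i (hOx i hi)

theorem isAlgEigen_coe_of_isEigen {μ : ℝ} (h : IsEigen A μ) : IsAlgEigen A μ := by
  obtain ⟨x, hne, hx⟩ := h
  obtain ⟨C, hC⟩ := exists_maximalAt A μ
  obtain ⟨D, hDx, hCD⟩ :=
    exists_valAt_le_of_isSubeigenvector (isSubeigenvector_of_mpMulVec_eq hx) C
  obtain ⟨Z, hZne, hZx, hZw⟩ := exists_multiCircuit_mcWeight_eq_of_mpMulVec_eq hne hx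
  have hdisj : Disjoint D.verts Z.verts :=
    Finset.disjoint_left.mpr fun i hD hZ => hZx i hZ (hDx i hD)
  have hD : MaximalAt A D μ := fun C' => (hC C').trans hCD
  refine Or.inl ⟨WithBot.coe_ne_bot, D, D.union Z, isLamMax_coe_iff.mpr hD,
    isLamMax_coe_iff.mpr fun C' => (valAt_union_of_mcWeight_eq hdisj hZw).symm ▸ hD C', ?_⟩
  change D.verts.card ≠ (D.verts ∪ Z.verts).card
  rw [Finset.card_union_of_disjoint hdisj]
  exact (Nat.lt_add_of_pos_right hZne.card_pos).ne

end Maximal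

theorem eigen_is_algEigen {n : ℕ} (A : Matrix (Fin n) (Fin n) RMax) (l : RMax)
    (hl : IsEigen A l) : IsAlgEigen A l := by
  induction l using WithBot.recBotCoe with
  | bot => exact isAlgEigen_bot_of_isEigen hl
  | coe μ => exact isAlgEigen_coe_of_isEigen hl
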